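/- Let a, b, c > 0 with a < b and with a, b, c satisfying the triangle inequalities (a+b > c, b+c > a, c+a > b). Let S be the area of the hyperbolic triangle with sides a, b, c and S′ the area of the hyperbolic (isosceles) triangle with sides (a+b)/2, (a+b)/2, c. Then S < S′. -/

import Mathlib

/-!
With `x = (b + c - a) / 4` and `y = (c + a - b) / 4`, Heron's product is
`tanh ((a + b + c) / 4) * tanh ((a + b - c) / 4) * (tanh x * tanh y)`, and averaging `a` and `b`
keeps the first two factors while replacing both `x` and `y` by their mean `c / 4`. Since
`tanh x * tanh y = (cosh (x + y) - cosh (x - y)) / (cosh (x + y) + cosh (x - y))` decreases as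
`cosh (x - y)` grows, it is strictly maximised, for fixed `x + y`, at `x = y`.
-/

open Real

/-- The area of the hyperbolic triangle with side lengths `a, b, c`, computed via the
hyperbolic Heron formula `tan²(S/2) = tanh(s/2)·tanh((s-a)/2)·tanh((s-b)/2)·tanh((s-c)/2)`
with `s = (a+b+c)/2` (so `(s-a)/2 = (b+c-a)/4`, etc.). -/
noncomputable def hHeronArea (a b c : ℝ) : ℝ :=
  2 * Real.arctan (Real.sqrt (Real.tanh ((a + b + c) / 4) * Real.tanh ((b + c - a) / 4) *
    Real.tanh ((c + a - b) / 4) * Real.tanh ((a + b - c) / 4)))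

theorem Real.tanh_pos {x : ℝ} (hx : 0 < x) : 0 < tanh x := by
  rw [tanh_eq_sinh_div_cosh]
  exact div_pos (sinh_pos_iff.2 hx) (cosh_pos x)

theorem Real.tanh_mul_tanh (x y : ℝ) :
    tanh x * tanh y = (cosh (x + y) - cosh (x - y)) / (cosh (x + y) + cosh (x - y)) := by
  have hsum : cosh (x + y) + cosh (x - y) = 2 * (cosh x * cosh y) := by
    rw [cosh_add, cosh_sub]; ring
  have hcc : cosh x * cosh y ≠ 0 := (mul_pos (cosh_pos x) (cosh_pos y)).ne'
  rw [hsum, tanh_eq_sinh_div_cosh, tanh_eq_sinh_div_cosh, div_mul_div_comm, cosh_add, cosh_sub]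
  field_simp
  ring

theorem Real.tanh_mul_tanh_lt_tanh_sq {x y : ℝ} (hxy : x ≠ y) :
    tanh x * tanh y < tanh ((x + y) / 2) ^ 2 := by
  have hC := cosh_pos (x + y)
  have hD : 1 < cosh (x - y) := one_lt_cosh.2 (sub_ne_zero.2 hxy)
  rw [sq, tanh_mul_tanh, tanh_mul_tanh, add_halves, sub_self, cosh_zero,
    div_lt_div_iff₀ (by positivity) (by positivity)]
  nlinarith

theorem hyperbolic_average_increases_area_general (a b c : ℝ)
    (hc : 0 < c) (hab : a < b) (htri₁ : a + b > c) :
    hHeronArea a b c < hHeronArea ((a + b) / 2) ((a + b) / 2) c := by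
  have hinner : tanh ((b + c - a) / 4) * tanh ((c + a - b) / 4) < tanh (c / 4) ^ 2 := by
    convert tanh_mul_tanh_lt_tanh_sq (x := (b + c - a) / 4) (y := (c + a - b) / 4)
      (by intro h; linarith) using 3
    ring
  have hout : 0 < tanh ((a + b + c) / 4) * tanh ((a + b - c) / 4) :=
    mul_pos (tanh_pos (by linarith)) (tanh_pos (by linarith))
  have hc4 : 0 < tanh (c / 4) := tanh_pos (by positivity)
  have hscalene : hHeronArea a b c = 2 * arctan √(tanh ((a + b + c) / 4) * tanh ((a + b - c) / 4) *
      (tanh ((b + c - a) / 4) * tanh ((c + a - b) / 4))) := by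
    unfold hHeronArea; ring_nf
  have hisosceles : hHeronArea ((a + b) / 2) ((a + b) / 2) c =
      2 * arctan √(tanh ((a + b + c) / 4) * tanh ((a + b - c) / 4) * tanh (c / 4) ^ 2) := by
    unfold hHeronArea; ring_nf
  rw [hscalene, hisosceles]
  gcongr 2 * arctan ?_
  -- the scalene product may be negative (then `√` clamps it to `0`), so compare via the right side
  rw [sqrt_lt_sqrt_iff_of_pos (by positivity)]
  exact mul_lt_mul_of_pos_left hinner hout

/-- Averaging two unequal sides of a hyperbolic triangle, keeping the third side (and hence
the perimeter) fixed, strictly increases the area. -/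
theorem hyperbolic_average_increases_area (a b c : ℝ)
    (ha : 0 < a) (hb : 0 < b) (hc : 0 < c) (hab : a < b)
    (htri₁ : a + b > c) (htri₂ : b + c > a) (htri₃ : c + a > b) :
    hHeronArea a b c < hHeronArea ((a + b) / 2) ((a + b) / 2) c :=
  hyperbolic_average_increases_area_general a b c hc hab htri₁
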